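/- arXiv:2306.10948 — 4 statements merged into one kernel-verified Lean document; each statement's English description precedes it below -/
import Mathlib

section
/- In a finite poset, every weakly hereditary family is convex, i.e., every local minimum of the family is a minimum of the family. -/
/-- Every weakly hereditary family in a finite poset is convex:
every local minimum (no immediate successor, i.e. covered element, in F)
is a minimum (no successor in F). -/
theorem stmt_1 {α : Type*} [Fintype α] [PartialOrder α] (F : Set α)
    (wh : ∀ a ∈ F, ∀ m ∈ F, (∀ s ∈ F, ¬ s < m) →
      ∀ q, q < a → m ≤ q → q ∈ F) :
    ∀ a ∈ F, (∀ q, q ⋖ a → q ∉ F) → ∀ s ∈ F, ¬ s < a := by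
  intro a ha hloc s hs hsa
  -- find a minimal element m of F with m ≤ s
  obtain ⟨m, hm, hmin⟩ : ∃ m ∈ {x ∈ F | x ≤ s}, ∀ a' ∈ {x ∈ F | x ≤ s}, id a' ≤ id m → id m = id a' := by
    obtain ⟨m, hm⟩ := (Set.toFinite {x ∈ F | x ≤ s}).exists_minimal ⟨s, hs, le_refl s⟩
    exact ⟨m, hm.prop, fun a' ha' h => le_antisymm (hm.le_of_le ha' h) h⟩
  obtain ⟨hmF, hms⟩ := hm
  have hminF : ∀ t ∈ F, ¬ t < m := by
    intro t ht htm
    have h := hmin t ⟨ht, htm.le.trans hms⟩ htm.le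
    simp only [id] at h
    exact absurd htm (h ▸ lt_irrefl t)
  have hma : m < a := lt_of_le_of_lt hms hsa
  obtain ⟨q, hmq, hqa⟩ := hma.exists_le_covby
  exact hloc q hqa (wh a ha m hmF hminF q hqa.lt hmq)
end

section
/- Every finite acyclic digraph has a unique kernel. -/
/-- Every finite acyclic digraph has a unique kernel. -/
theorem stmt_12 {V : Type*} [Fintype V] (E : V → V → Prop)
    (hacyc : ∀ v : V, ¬ Relation.TransGen E v v) :
    ∃! K : Set V,
      (∀ a ∈ K, ∀ b ∈ K, ¬ E a b) ∧
      (∀ v ∉ K, ∃ w ∈ K, E v w) := by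
  classical
  -- the relation "w is an out-neighbor of v" is well-founded
  set r : V → V → Prop := fun a b => E b a with hr
  haveI : IsTrans V (Relation.TransGen r) := ⟨fun _ _ _ => Relation.TransGen.trans⟩
  haveI : IsIrrefl V (Relation.TransGen r) := ⟨by
    intro a ha
    exact hacyc a ((Relation.transGen_swap).mp ha)⟩
  have hwf' : WellFounded (Relation.TransGen r) :=
    Finite.wellFounded_of_trans_of_irrefl _
  have hwf : WellFounded r := Subrelation.wf (fun h => Relation.TransGen.single h) hwf'
  -- define the kernel by well-founded recursion
  let ker : V → Prop := hwf.fix (fun v ih => ∀ w, (h : E v w) → ¬ ih w h)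
  have hker : ∀ v, ker v ↔ ∀ w, E v w → ¬ ker w := fun v =>
    iff_of_eq (hwf.fix_eq (fun v (ih : ∀ w, r w v → Prop) => ∀ w, (h : E v w) → ¬ ih w h) v)
  refine ⟨{v | ker v}, ⟨?_, ?_⟩, ?_⟩
  · intro a ha b hb hab
    exact ((hker a).mp ha) b hab hb
  · intro v hv
    have := (hker v).not.mp hv
    push_neg at this
    obtain ⟨w, hw, hkw⟩ := this
    exact ⟨w, hkw, hw⟩
  · rintro K ⟨hind, hdom⟩
    have key : ∀ v, v ∈ K ↔ ker v := by
      intro v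
      induction v using hwf.induction with
      | _ v ih =>
        constructor
        · intro hvK
          refine (hker v).mpr (fun w hw hkw => ?_)
          have hwK : w ∈ K := (ih w hw).mpr hkw
          exact hind v hvK w hwK hw
        · intro hkv
          by_contra hvK
          obtain ⟨w, hwK, hw⟩ := hdom v hvK
          exact (hker v).mp hkv w hw ((ih w hw).mp hwK)
    ext v
    exact key v
end

section
/- If a digraph has the property that all its directed cycles are odd, then it has at most one kernel. -/
/-- If every directed (simple) cycle of a finite digraph has odd length,
then the digraph has at most one kernel. -/
theorem stmt_13 {V : Type*} [Fintype V] (E : V → V → Prop)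
    (hodd : ∀ n : ℕ, 0 < n → ∀ c : ℕ → V,
      (Function.Injective fun i : Fin n => c i.1) →
      c n = c 0 → (∀ i < n, E (c i) (c (i + 1))) → Odd n)
    (K₁ K₂ : Set V)
    (h₁ : (∀ a ∈ K₁, ∀ b ∈ K₁, ¬ E a b) ∧ (∀ v ∉ K₁, ∃ w ∈ K₁, E v w))
    (h₂ : (∀ a ∈ K₂, ∀ b ∈ K₂, ¬ E a b) ∧ (∀ v ∉ K₂, ∃ w ∈ K₂, E v w)) :
    K₁ = K₂ := by
  classical
  have main : ∀ (A B : Set V),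
      ((∀ a ∈ A, ∀ b ∈ A, ¬ E a b) ∧ (∀ v ∉ A, ∃ w ∈ A, E v w)) →
      ((∀ a ∈ B, ∀ b ∈ B, ¬ E a b) ∧ (∀ v ∉ B, ∃ w ∈ B, E v w)) →
      ∀ v, v ∈ A → v ∉ B → False := by
    intro A B hA hB v hv1 hv2
    set P : V → Prop := fun x => x ∈ A ∧ x ∉ B with hPdef
    set Q : V → Prop := fun x => x ∈ B ∧ x ∉ A with hQdef
    have hPQ : ∀ x, P x → ¬ Q x := fun x hp hq => hq.2 hp.1
    have step1 : ∀ x, P x → ∃ w, Q w ∧ E x w := by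
      intro x hx
      obtain ⟨w, hw, he⟩ := hB.2 x hx.2
      exact ⟨w, ⟨hw, fun hw1 => hA.1 x hx.1 w hw1 he⟩, he⟩
    have step2 : ∀ x, Q x → ∃ w, P w ∧ E x w := by
      intro x hx
      obtain ⟨w, hw, he⟩ := hA.2 x hx.2
      exact ⟨w, ⟨hw, fun hw2 => hB.1 x hx.1 w hw2 he⟩, he⟩
    choose w1 hw1 using step1
    choose w2 hw2 using step2
    set step : V → V := fun x =>
      if h : P x then w1 x h else if h' : Q x then w2 x h' else x with hstep
    set c : ℕ → V := fun n => step^[n] v with hc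
    have hsucc : ∀ n, c (n + 1) = step (c n) := by
      intro n
      simp only [hc]
      exact Function.iterate_succ_apply' step n v
    have inv : ∀ n, (Even n → P (c n)) ∧ (¬ Even n → Q (c n)) := by
      intro n
      induction n with
      | zero =>
        exact ⟨fun _ => ⟨hv1, hv2⟩, fun h => absurd Even.zero h⟩
      | succ n ih =>
        rcases Nat.even_or_odd n with he | ho
        · have hp := ih.1 he
          have hq : Q (c (n + 1)) := by
            rw [hsucc n, hstep]
            simp only [dif_pos hp]
            exact (hw1 (c n) hp).1
          exact ⟨fun h => absurd he (Nat.even_add_one.mp h), fun _ => hq⟩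
        · have hqn : Q (c n) := ih.2 (Nat.not_even_iff_odd.mpr ho)
          have hnp : ¬ P (c n) := fun hp => hPQ _ hp hqn
          have hp : P (c (n + 1)) := by
            rw [hsucc n, hstep]
            simp only [dif_neg hnp, dif_pos hqn]
            exact (hw2 (c n) hqn).1
          refine ⟨fun _ => hp, fun h => absurd ?_ h⟩
          exact Nat.even_add_one.mpr (Nat.not_even_iff_odd.mpr ho)
    have edge : ∀ n, E (c n) (c (n + 1)) := by
      intro n
      rcases Nat.even_or_odd n with he | ho
      · have hp := (inv n).1 he
        rw [hsucc n, hstep]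
        simp only [dif_pos hp]
        exact (hw1 (c n) hp).2
      · have hqn := (inv n).2 (Nat.not_even_iff_odd.mpr ho)
        have hnp : ¬ P (c n) := fun hp => hPQ _ hp hqn
        rw [hsucc n, hstep]
        simp only [dif_neg hnp, dif_pos hqn]
        exact (hw2 (c n) hqn).2
    have parity : ∀ n m, c n = c m → (Even n ↔ Even m) := by
      intro n m hnm
      constructor
      · intro hen
        by_contra hem
        exact hPQ (c n) ((inv n).1 hen) (hnm ▸ (inv m).2 hem)
      · intro hem
        by_contra hen
        exact hPQ (c m) ((inv m).1 hem) (hnm ▸ (inv n).2 hen)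
    -- pigeonhole
    obtain ⟨a, b, hab, hcab⟩ := Finite.exists_ne_map_eq_of_infinite c
    have hS : ∃ j, ∃ i, i < j ∧ c i = c j := by
      rcases lt_or_gt_of_ne hab with h | h
      · exact ⟨b, a, h, hcab⟩
      · exact ⟨a, b, h, hcab.symm⟩
    set j := Nat.find hS with hj
    obtain ⟨i, hij, hcij⟩ := Nat.find_spec hS
    set n := j - i with hn
    have hipn : i + n = j := by omega
    have hnpos : 0 < n := by omega
    have hinj : Function.Injective fun k : Fin n => c (i + k.1) := by
      intro p q hpq
      simp only at hpq
      by_contra hne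
      have hne' : p.1 ≠ q.1 := fun h => hne (Fin.ext h)
      have contra : ∀ (p q : Fin n), p.1 < q.1 → c (i + p.1) = c (i + q.1) → False := by
        intro p q hlt heq
        have hltj : i + q.1 < j := by have := q.2; omega
        exact Nat.find_min hS hltj ⟨i + p.1, by omega, heq⟩
      rcases lt_or_gt_of_ne hne' with h | h
      · exact contra p q h hpq
      · exact contra q p h hpq.symm
    have hclose : c (i + n) = c (i + 0) := by
      rw [hipn, add_zero]; exact hcij.symm
    have hoddn : Odd n :=
      hodd n hnpos (fun k => c (i + k)) hinj hclose (fun k _ => edge (i + k))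
    have heven : Even n := by
      have hpar := parity i j hcij
      rw [hn, Nat.even_sub hij.le]
      exact hpar.symm
    exact (Nat.not_even_iff_odd.mpr hoddn) heven
  ext v
  constructor
  · intro hv
    by_contra hv2
    exact main K₁ K₂ h₁ h₂ v hv hv2
  · intro hv
    by_contra hv2
    exact main K₂ K₁ h₂ h₁ v hv hv2
end

section
/- (Shapley) If every 2×2 submatrix of a finite real matrix M has a saddle point, then M has a saddle point. -/
section ShapleyAux

variable {I : Type*} {J : Type*}

/-- If every 2×2 submatrix has a saddle point, then no 2×2 submatrix can have a
strictly dominated diagonal. -/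
lemma shapley_no_bad (M : I → J → ℝ)
    (h : ∀ i₁ i₂ : I, ∀ j₁ j₂ : J, i₁ ≠ i₂ → j₁ ≠ j₂ →
      ∃ i ∈ ({i₁, i₂} : Set I), ∃ j ∈ ({j₁, j₂} : Set J),
        (∀ j' ∈ ({j₁, j₂} : Set J), M i j ≤ M i j') ∧
        (∀ i' ∈ ({i₁, i₂} : Set I), M i' j ≤ M i j))
    {a b : I} {p q : J} (hab : a ≠ b) (hpq : p ≠ q)
    (h1 : M a q < M a p) (h2 : M a q < M b q)
    (h3 : M b p < M a p) (h4 : M b p < M b q) : False := by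
  obtain ⟨i, hi, j, hj, hrow, hcol⟩ := h a b p q hab hpq
  simp only [Set.mem_insert_iff, Set.mem_singleton_iff] at hi hj
  rcases hi with rfl | rfl <;> rcases hj with rfl | rfl
  · have := hrow q (by simp)
    linarith
  · have := hcol b (by simp)
    linarith
  · have := hcol a (by simp)
    linarith
  · have := hrow p (by simp)
    linarith

lemma shapley_aux [Fintype I] [Nonempty I] (n : ℕ) :
    ∀ (J : Type*) [Fintype J] [Nonempty J], Fintype.card J ≤ n →
    ∀ (M : I → J → ℝ),
    (∀ i₁ i₂ : I, ∀ j₁ j₂ : J, i₁ ≠ i₂ → j₁ ≠ j₂ →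
      ∃ i ∈ ({i₁, i₂} : Set I), ∃ j ∈ ({j₁, j₂} : Set J),
        (∀ j' ∈ ({j₁, j₂} : Set J), M i j ≤ M i j') ∧
        (∀ i' ∈ ({i₁, i₂} : Set I), M i' j ≤ M i j)) →
    ∃ i j, (∀ j', M i j ≤ M i j') ∧ (∀ i', M i' j ≤ M i j) := by
  induction n with
  | zero =>
    intro J _ _ hcard M _
    exact absurd (Fintype.card_pos (α := J)) (by omega)
  | succ n ih =>
    intro J _ _ hcard M hM
    classical
    by_cases hsub : ∀ a b : J, a = b
    · -- single column (up to equality): maximize the column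
      obtain ⟨i, -, hi⟩ := Finset.exists_max_image Finset.univ
        (fun i => M i (Classical.arbitrary J)) ⟨Classical.arbitrary I, Finset.mem_univ _⟩
      refine ⟨i, Classical.arbitrary J, fun j' => ?_, fun i' => hi i' (Finset.mem_univ _)⟩
      rw [hsub j' (Classical.arbitrary J)]
    · push_neg at hsub
      obtain ⟨j₀, b, hb⟩ := hsub
      -- delete column j₀
      have hne' : Nonempty {j : J // j ≠ j₀} := ⟨⟨b, fun e => hb e.symm⟩⟩
      have hcard' : Fintype.card {j : J // j ≠ j₀} ≤ n := by
        have h5 : Fintype.card {j : J // j ≠ j₀} < Fintype.card J :=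
          Fintype.card_subtype_lt (x := j₀) (by simp)
        omega
      have hM' : ∀ i₁ i₂ : I, ∀ p q : {j : J // j ≠ j₀}, i₁ ≠ i₂ → p ≠ q →
          ∃ i ∈ ({i₁, i₂} : Set I), ∃ j ∈ ({p, q} : Set {j : J // j ≠ j₀}),
            (∀ j' ∈ ({p, q} : Set {j : J // j ≠ j₀}), M i j.1 ≤ M i j'.1) ∧
            (∀ i' ∈ ({i₁, i₂} : Set I), M i' j.1 ≤ M i j.1) := by
        intro i₁ i₂ pa qa hi hpq
        obtain ⟨i, hi', j, hj', hrow, hcol⟩ :=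
          hM i₁ i₂ pa.1 qa.1 hi (fun e => hpq (Subtype.ext e))
        simp only [Set.mem_insert_iff, Set.mem_singleton_iff] at hj'
        refine ⟨i, hi', ?_⟩
        have key : ∀ j' : {j : J // j ≠ j₀}, j' ∈ ({pa, qa} : Set {j : J // j ≠ j₀}) →
            j'.1 ∈ ({pa.1, qa.1} : Set J) := by
          intro j' hj''
          simp only [Set.mem_insert_iff, Set.mem_singleton_iff] at hj'' ⊢
          rcases hj'' with h | h <;> simp [h]
        rcases hj' with hj' | hj'
        · refine ⟨pa, by simp, fun j' hj'' => ?_, fun i' hi'' => ?_⟩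
          · rw [← hj']; exact hrow j'.1 (key j' hj'')
          · rw [← hj']; exact hcol i' hi''
        · refine ⟨qa, by simp, fun j' hj'' => ?_, fun i' hi'' => ?_⟩
          · rw [← hj']; exact hrow j'.1 (key j' hj'')
          · rw [← hj']; exact hcol i' hi''
      -- saddle points of the reduced matrix
      set P : I × {j : J // j ≠ j₀} → Prop := fun pr =>
        (∀ j : {j : J // j ≠ j₀}, M pr.1 pr.2.1 ≤ M pr.1 j.1) ∧
        (∀ i, M i pr.2.1 ≤ M pr.1 pr.2.1) with hP
      have hPne : (Finset.univ.filter P).Nonempty := by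
        obtain ⟨i, j, hr, hc⟩ := ih {j : J // j ≠ j₀} hcard' (fun i j => M i j.1) hM'
        exact ⟨(i, j), Finset.mem_filter.2 ⟨Finset.mem_univ _, hr, hc⟩⟩
      obtain ⟨⟨r, c⟩, hrc, hmax⟩ :=
        Finset.exists_max_image (Finset.univ.filter P) (fun pr => M pr.1 j₀) hPne
      obtain ⟨hrow, hcol⟩ : P (r, c) := (Finset.mem_filter.1 hrc).2
      by_cases h1 : M r c.1 ≤ M r j₀
      · -- the saddle of the reduced matrix extends
        refine ⟨r, c.1, fun j' => ?_, hcol⟩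
        by_cases e : j' = j₀
        · rw [e]; exact h1
        · exact hrow ⟨j', e⟩
      push_neg at h1
      by_cases h2 : ∀ i, M i j₀ ≤ M r j₀
      · -- (r, j₀) is a global saddle
        refine ⟨r, j₀, fun j' => ?_, h2⟩
        by_cases e : j' = j₀
        · rw [e]
        · exact h1.le.trans (hrow ⟨j', e⟩)
      push_neg at h2
      obtain ⟨i₂, hi₂⟩ := h2
      obtain ⟨i₁, -, hi₁max⟩ := Finset.exists_max_image Finset.univ
        (fun i => M i j₀) ⟨i₂, Finset.mem_univ _⟩
      have hlt2 : M r j₀ < M i₁ j₀ := hi₂.trans_le (hi₁max i₂ (Finset.mem_univ _))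
      have hri : r ≠ i₁ := fun e => lt_irrefl _ (e ▸ hlt2)
      obtain ⟨i, hi, j, hj, hrow2, hcol2⟩ := hM r i₁ c.1 j₀ hri c.2
      simp only [Set.mem_insert_iff, Set.mem_singleton_iff] at hi hj
      rcases hi with hie | hie <;> rcases hj with hje | hje <;>
        rw [hie, hje] at hrow2 hcol2
      · -- saddle at (r, c): contradicts M r j₀ < M r c
        exact absurd (hrow2 j₀ (by simp)) (not_le.2 h1)
      · -- saddle at (r, j₀): contradicts column max at i₁
        exact absurd (hcol2 i₁ (by simp)) (not_le.2 hlt2)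
      · -- saddle at (i₁, c): (i₁, c) is a better saddle of reduced matrix, contradiction
        exfalso
        have e1 : M r c.1 ≤ M i₁ c.1 := hcol2 r (by simp)
        have hv : M i₁ c.1 = M r c.1 := le_antisymm (hcol i₁) e1
        have hge : M r c.1 ≤ M i₁ j₀ := e1.trans (hrow2 j₀ (by simp))
        have hsubcl : ∀ j : {j : J // j ≠ j₀}, M r c.1 ≤ M i₁ j.1 := by
          intro j₂
          by_contra hc'
          push_neg at hc'
          exact shapley_no_bad M hM hri j₂.2
            (h1.trans_le (hrow j₂)) hlt2
            (hc'.trans_le (hrow j₂)) (hc'.trans_le hge)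
        have hmem : (i₁, c) ∈ Finset.univ.filter P :=
          Finset.mem_filter.2 ⟨Finset.mem_univ _,
            fun j => hv.le.trans (hsubcl j), fun i => (hcol i).trans hv.ge⟩
        exact absurd (hmax (i₁, c) hmem) (not_le.2 hlt2)
      · -- saddle at (i₁, j₀): (i₁, j₀) is a global saddle
        have hb2 : M i₁ j₀ ≤ M r c.1 := (hrow2 c.1 (by simp)).trans (hcol i₁)
        refine ⟨i₁, j₀, fun j' => ?_, fun i => hi₁max i (Finset.mem_univ _)⟩
        by_cases e : j' = j₀
        · rw [e]
        · by_contra hc'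
          push_neg at hc'
          exact shapley_no_bad M hM hri e
            (h1.trans_le (hrow ⟨j', e⟩)) hlt2
            (hc'.trans_le (hb2.trans (hrow ⟨j', e⟩))) hc'

end ShapleyAux

/-- (Shapley) If every 2×2 submatrix of a finite real matrix has a saddle
point, then the matrix itself has a saddle point. -/
theorem stmt_16 {I J : Type*} [Fintype I] [Fintype J] [Nonempty I] [Nonempty J]
    (M : I → J → ℝ)
    (h : ∀ i₁ i₂ : I, ∀ j₁ j₂ : J, i₁ ≠ i₂ → j₁ ≠ j₂ →
      ∃ i ∈ ({i₁, i₂} : Set I), ∃ j ∈ ({j₁, j₂} : Set J),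
        (∀ j' ∈ ({j₁, j₂} : Set J), M i j ≤ M i j') ∧
        (∀ i' ∈ ({i₁, i₂} : Set I), M i' j ≤ M i j)) :
    ∃ i j, (∀ j', M i j ≤ M i j') ∧ (∀ i', M i' j ≤ M i j) := by
  exact shapley_aux (Fintype.card J) J le_rfl M h
end
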